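/- arXiv:1812.07956 — 2 statements merged into one kernel-verified Lean document; each statement's English description precedes it below -/
import Mathlib

section
/- Let T > 0 be a fixed time horizon and assume h(w₀) = 0. Then there exist constants C > 0 and α₀ > 0 (depending on h, R, w₀ and T but not on α) such that for every α ≥ α₀, sup_{t ∈ [0,T]} ‖α h(w_α(t)) − α h̄(w̄_α(t))‖ ≤ C/α. -/
/-!
Along the gradient flow of `F_α` the loss `R (α h (w_α t))` never exceeds `R 0`, so for a loss
with `L_R`-Lipschitz gradient the residual gradient `∇R` stays bounded by `√(2 L_R R 0)`. The
parameter velocity is then `O(1/α)`, hence on `[0, T]` the parameters stay within `O(1/α)` of `w₀`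
and, `Dh` being locally Lipschitz, the tangent kernel `Dh(w) Dh(w)†` stays within `O(1/α)` of
`Dh(w₀) Dh(w₀)†`. Both scaled outputs `α h(w_α)` and `α h̄(w̄_α)` follow kernel flows
`y' = -K ∇R(y)` from the same point, so Grönwall turns the `O(1/α)` kernel drift into an `O(1/α)`
bound on the output gap.
-/

open Set Metric InnerProductSpace
open scoped RealInnerProductSpace NNReal InnerProduct

section

variable {E H : Type*} [NormedAddCommGroup E] [InnerProductSpace ℝ E] [CompleteSpace E]
  [NormedAddCommGroup H] [InnerProductSpace ℝ H] [CompleteSpace H]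

theorem le_add_inner_gradient_add_of_lipschitzWith {R : H → ℝ} {K : ℝ≥0}
    (hR : Differentiable ℝ R) (hK : LipschitzWith K (gradient R)) (y d : H) :
    R (y + d) ≤ R y + ⟪gradient R y, d⟫ + K / 2 * ‖d‖ ^ 2 := by
  set g := gradient R y
  have hψ : ∀ s : ℝ, HasDerivAt (fun s : ℝ => R (y + s • d) - s * ⟪g, d⟫)
      (⟪gradient R (y + s • d), d⟫ - ⟪g, d⟫) s := fun s => by
    have hline : HasDerivAt (fun s : ℝ => y + s • d) d s := by
      simpa using ((hasDerivAt_id s).smul_const d).const_add y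
    have hRs : HasDerivAt (fun s : ℝ => R (y + s • d)) ⟪gradient R (y + s • d), d⟫ s := by
      simpa [Function.comp_def] using
        (hR (y + s • d)).hasGradientAt.hasFDerivAt.comp_hasDerivAt s hline
    simpa using hRs.fun_sub ((hasDerivAt_id s).mul_const ⟪g, d⟫)
  have hB : ∀ s : ℝ, HasDerivAt (fun s : ℝ => R y + K / 2 * ‖d‖ ^ 2 * s ^ 2)
      (K * ‖d‖ ^ 2 * s) s := fun s => by
    have := ((hasDerivAt_pow 2 s).const_mul ((K : ℝ) / 2 * ‖d‖ ^ 2)).const_add (R y)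
    exact this.congr_deriv (by ring)
  have key := image_le_of_deriv_right_le_deriv_boundary (a := 0) (b := 1)
    (fun s _ => (hψ s).continuousAt.continuousWithinAt) (fun s _ => (hψ s).hasDerivWithinAt)
    (by simp) (fun s _ => (hB s).continuousAt.continuousWithinAt)
    (fun s _ => (hB s).hasDerivWithinAt) (fun s hs => ?_) (right_mem_Icc.2 zero_le_one)
  · simp only [one_smul, one_mul, one_pow, mul_one] at key
    linarith
  calc ⟪gradient R (y + s • d), d⟫ - ⟪g, d⟫ = ⟪gradient R (y + s • d) - g, d⟫ :=
        (inner_sub_left _ _ _).symm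
    _ ≤ ‖gradient R (y + s • d) - g‖ * ‖d‖ := real_inner_le_norm _ _
    _ ≤ K * ‖s • d‖ * ‖d‖ := by
        gcongr
        simpa [dist_eq_norm] using hK.dist_le_mul (y + s • d) y
    _ = K * ‖d‖ ^ 2 * s := by rw [norm_smul, Real.norm_of_nonneg hs.1]; ring

theorem sq_norm_gradient_le_of_nonneg {R : H → ℝ} {K : ℝ≥0} (hR₀ : ∀ y, 0 ≤ R y)
    (hR : Differentiable ℝ R) (hK : LipschitzWith K (gradient R)) (hK₀ : 0 < K) (y : H) :
    ‖gradient R y‖ ^ 2 ≤ 2 * K * R y := by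
  have hK₀' : (0 : ℝ) < K := hK₀
  set g := gradient R y
  -- one gradient step of length `1 / K`
  have hstep := le_add_inner_gradient_add_of_lipschitzWith hR hK y (-((K : ℝ)⁻¹ • g))
  rw [inner_neg_right, real_inner_smul_right, real_inner_self_eq_norm_sq, norm_neg, norm_smul,
    Real.norm_of_nonneg (inv_nonneg.2 hK₀'.le)] at hstep
  have hdecr : (K : ℝ) / 2 * ((K : ℝ)⁻¹ * ‖g‖) ^ 2 = (K : ℝ)⁻¹ * ‖g‖ ^ 2 / 2 := by
    field_simp
  have hhalf : (K : ℝ)⁻¹ * ‖g‖ ^ 2 / 2 ≤ R y := by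
    linarith [hR₀ (y + -((K : ℝ)⁻¹ • g))]
  calc ‖g‖ ^ 2 = 2 * K * ((K : ℝ)⁻¹ * ‖g‖ ^ 2 / 2) := by field_simp
    _ ≤ 2 * K * R y := by gcongr

theorem hasGradientAt_smul_comp_div_sq {R : H → ℝ} {φ : E → H} {A : E →L[ℝ] H} {g : H}
    {α : ℝ} {u : E} (hR : HasGradientAt R g (α • φ u)) (hφ : HasFDerivAt φ A u) (hα : α ≠ 0) :
    HasGradientAt (fun v => R (α • φ v) / α ^ 2) (α⁻¹ • (A†) g) u := by
  have hcomp : HasFDerivAt (fun v => R (α • φ v) * (α ^ 2)⁻¹)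
      ((α ^ 2)⁻¹ • (toDual ℝ H g).comp (α • A)) u :=
    HasFDerivAt.mul_const (hR.hasFDerivAt.comp u (hφ.const_smul α)) _
  have hderiv : (α ^ 2)⁻¹ • (toDual ℝ H g).comp (α • A) = toDual ℝ E (α⁻¹ • (A†) g) := by
    ext v
    simp only [smul_apply, ContinuousLinearMap.comp_apply, toDual_apply_apply,
      real_inner_smul_left, real_inner_smul_right, ContinuousLinearMap.adjoint_inner_left,
      smul_eq_mul]
    field_simp
  rw [hasGradientAt_iff_hasFDerivAt, ← hderiv]
  simpa only [div_eq_mul_inv] using hcomp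

def IsGradientFlow (F : E → ℝ) (w : ℝ → E) : Prop :=
  ∀ t, 0 ≤ t → HasDerivAt w (-gradient F (w t)) t

theorem IsGradientFlow.antitoneOn {F : E → ℝ} {w : ℝ → E} (hw : IsGradientFlow F w)
    (hF : Differentiable ℝ F) : AntitoneOn (F ∘ w) (Ici 0) := by
  have hdecay : ∀ t, 0 ≤ t → HasDerivAt (F ∘ w) (-‖gradient F (w t)‖ ^ 2) t := fun t ht => by
    refine ((hF (w t)).hasGradientAt.hasFDerivAt.comp_hasDerivAt t (hw t ht)).congr_deriv ?_
    rw [toDual_apply_apply, inner_neg_right, real_inner_self_eq_norm_sq]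
  refine antitoneOn_of_deriv_nonpos (convex_Ici 0)
    (fun t ht => (hdecay t ht).continuousAt.continuousWithinAt)
    (fun t ht => (hdecay t (interior_subset ht)).differentiableAt.differentiableWithinAt)
    fun t ht => ?_
  rw [(hdecay t (interior_subset ht)).deriv]
  exact neg_nonpos.2 (sq_nonneg _)

theorem norm_sub_le_mul_of_norm_deriv_lt_of_mem_closedBall {F : Type*} [NormedAddCommGroup F]
    [NormedSpace ℝ F] {f f' : ℝ → F} {T r V : ℝ} (hf : ∀ t ∈ Icc 0 T, HasDerivAt f (f' t) t)
    (hV : 0 ≤ V) (hVT : V * T ≤ r) (hf' : ∀ t ∈ Ico 0 T, ‖f t - f 0‖ ≤ r → ‖f' t‖ < V) :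
    ∀ t ∈ Icc 0 T, ‖f t - f 0‖ ≤ V * t := by
  -- the fence `V * t` is only touched at points with `‖f t - f 0‖ = V * t ≤ V * T ≤ r`
  refine image_norm_le_of_norm_deriv_right_lt_deriv_boundary (f := fun t => f t - f 0)
    (fun t ht => (hf t ht).continuousAt.continuousWithinAt.sub continuousWithinAt_const)
    (fun t ht => ((hf t (Ico_subset_Icc_self ht)).sub_const (f 0)).hasDerivWithinAt)
    (by simp) (fun t => (hasDerivAt_id t).const_mul V |>.congr_deriv (mul_one V))
    fun t ht hbd => hf' t ht ?_
  calc ‖f t - f 0‖ = V * t := hbd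
    _ ≤ V * T := by gcongr; exact ht.2.le
    _ ≤ r := hVT

section ScaledObjective

variable {R : H → ℝ} {φ : E → H} {Dφ : E → E →L[ℝ] H} {α : ℝ} {w : ℝ → E} {t : ℝ}

theorem IsGradientFlow.hasDerivAt_neg_smul_adjoint
    (hw : IsGradientFlow (fun u => R (α • φ u) / α ^ 2) w)
    (hR : Differentiable ℝ R) (hφ : ∀ u, HasFDerivAt φ (Dφ u) u) (hα : α ≠ 0) (ht : 0 ≤ t) :
    HasDerivAt w (-(α⁻¹ • ((Dφ (w t))†) (gradient R (α • φ (w t))))) t := by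
  rw [← (hasGradientAt_smul_comp_div_sq (hR _).hasGradientAt (hφ (w t)) hα).gradient]
  exact hw t ht

theorem IsGradientFlow.hasDerivAt_smul_comp
    (hw : IsGradientFlow (fun u => R (α • φ u) / α ^ 2) w)
    (hR : Differentiable ℝ R) (hφ : ∀ u, HasFDerivAt φ (Dφ u) u) (hα : α ≠ 0) (ht : 0 ≤ t) :
    HasDerivAt (fun s => α • φ (w s))
      (-(Dφ (w t) ∘L (Dφ (w t))†) (gradient R (α • φ (w t)))) t := by
  refine (((hφ (w t)).comp_hasDerivAt t
    (hw.hasDerivAt_neg_smul_adjoint hR hφ hα ht)).const_smul α).congr_deriv ?_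
  simp [smul_smul, hα]

theorem IsGradientFlow.norm_gradient_le
    (hw : IsGradientFlow (fun u => R (α • φ u) / α ^ 2) w)
    {K : ℝ≥0} (hR₀ : ∀ y, 0 ≤ R y) (hR : Differentiable ℝ R) (hK : LipschitzWith K (gradient R))
    (hK₀ : 0 < K) (hφ : Differentiable ℝ φ) (hφ₀ : φ (w 0) = 0) (ht : 0 ≤ t) :
    ‖gradient R (α • φ (w t))‖ ≤ √(2 * K * R 0) := by
  have hloss : R (α • φ (w t)) ≤ R 0 := by
    rcases eq_or_ne α 0 with rfl | hα
    · simp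
    have := hw.antitoneOn (by fun_prop) self_mem_Ici (mem_Ici.2 ht) ht
    simp only [Function.comp_apply, hφ₀, smul_zero] at this
    exact (div_le_div_iff_of_pos_right (by positivity)).1 this
  have hsq : ‖gradient R (α • φ (w t))‖ ^ 2 ≤ 2 * K * R 0 :=
    (sq_norm_gradient_le_of_nonneg hR₀ hR hK hK₀ _).trans (by gcongr)
  simpa using Real.abs_le_sqrt hsq

theorem IsGradientFlow.norm_sub_le_of_norm_fderiv_le
    (hw : IsGradientFlow (fun u => R (α • φ u) / α ^ 2) w) (hR : Differentiable ℝ R)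
    (hφ : ∀ u, HasFDerivAt φ (Dφ u) u) (hα : 0 < α) {r M G T : ℝ}
    (hDφ : ∀ u ∈ closedBall (w 0) r, ‖Dφ u‖ ≤ M) (hM : 0 ≤ M)
    (hG : ∀ t, 0 ≤ t → ‖gradient R (α • φ (w t))‖ ≤ G) (hT : (M * G + 1) * T ≤ α * r) :
    ∀ t ∈ Icc 0 T, ‖w t - w 0‖ ≤ (M * G + 1) / α * t := by
  have hG₀ : 0 ≤ G := (norm_nonneg _).trans (hG 0 le_rfl)
  refine norm_sub_le_mul_of_norm_deriv_lt_of_mem_closedBall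
    (fun t ht => hw.hasDerivAt_neg_smul_adjoint hR hφ hα.ne' ht.1) (by positivity)
    (by rwa [div_mul_eq_mul_div, div_le_iff₀' hα]) fun t ht hwt => ?_
  have hDφt : ‖Dφ (w t)‖ ≤ M := hDφ _ (mem_closedBall_iff_norm.2 hwt)
  calc ‖-(α⁻¹ • ((Dφ (w t))†) (gradient R (α • φ (w t))))‖
      = α⁻¹ * ‖((Dφ (w t))†) (gradient R (α • φ (w t)))‖ := by
        rw [norm_neg, norm_smul, Real.norm_of_nonneg (inv_nonneg.2 hα.le)]
    _ ≤ α⁻¹ * (‖Dφ (w t)‖ * ‖gradient R (α • φ (w t))‖) := by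
        gcongr
        simpa using ((Dφ (w t))†).le_opNorm (gradient R (α • φ (w t)))
    _ ≤ α⁻¹ * (M * G) := by gcongr; exact hG t ht.1
    _ < (M * G + 1) / α := by rw [div_eq_inv_mul]; gcongr; linarith

end ScaledObjective

theorem norm_comp_adjoint_sub_comp_adjoint_le (A B : E →L[ℝ] H) :
    ‖A ∘L A† - B ∘L B†‖ ≤ (‖A‖ + ‖B‖) * ‖A - B‖ := by
  have hsplit : A ∘L A† - B ∘L B† = A ∘L (A - B)† + (A - B) ∘L B† := by
    simp only [map_sub, ContinuousLinearMap.comp_sub, ContinuousLinearMap.sub_comp]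
    abel
  calc ‖A ∘L A† - B ∘L B†‖ ≤ ‖A‖ * ‖A - B‖ + ‖A - B‖ * ‖B‖ := by
        rw [hsplit]
        refine (norm_add_le _ _).trans (add_le_add ?_ ?_) <;>
          refine (ContinuousLinearMap.opNorm_comp_le _ _).trans_eq ?_ <;>
          rw [LinearIsometryEquiv.norm_map]
    _ = (‖A‖ + ‖B‖) * ‖A - B‖ := by ring

theorem gronwallBound_zero_le {K ε : ℝ} (hK : 0 ≤ K) (hε : 0 ≤ ε) (x : ℝ) :
    gronwallBound 0 K ε x ≤ ε * x * Real.exp (K * x) := by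
  rcases hK.eq_or_lt with rfl | hK
  · simp [gronwallBound_K0]
  have h1 := Real.add_one_le_exp (-(K * x))
  have h2 : Real.exp (-(K * x)) * Real.exp (K * x) = 1 := by rw [← Real.exp_add]; simp
  have hexp : Real.exp (K * x) - 1 ≤ K * x * Real.exp (K * x) := by
    nlinarith [Real.exp_pos (K * x)]
  calc gronwallBound 0 K ε x = ε / K * (Real.exp (K * x) - 1) := by
        simp [gronwallBound_of_K_ne_0 hK.ne']
    _ ≤ ε / K * (K * x * Real.exp (K * x)) := by gcongr
    _ = ε * x * Real.exp (K * x) := by field_simp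

theorem norm_comp_adjoint_apply_sub_comp_adjoint_apply_le (A B : E →L[ℝ] H) (x y : H) :
    ‖(A ∘L A†) x - (B ∘L B†) y‖ ≤ ‖A‖ ^ 2 * ‖x - y‖ + (‖A‖ + ‖B‖) * ‖A - B‖ * ‖y‖ := by
  have hsplit : (A ∘L A†) x - (B ∘L B†) y = (A ∘L A†) (x - y) + (A ∘L A† - B ∘L B†) y := by
    simp only [map_sub, sub_apply]
    abel
  have hAA : ‖A ∘L A†‖ ≤ ‖A‖ ^ 2 := (ContinuousLinearMap.opNorm_comp_le _ _).trans_eq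
    (by rw [LinearIsometryEquiv.norm_map, sq])
  rw [hsplit]
  refine (norm_add_le _ _).trans (add_le_add ?_ ?_) <;>
    refine (ContinuousLinearMap.le_opNorm _ _).trans ?_ <;> gcongr
  exact norm_comp_adjoint_sub_comp_adjoint_le A B

theorem norm_sub_le_of_hasDerivAt_neg_comp_adjoint {R : H → ℝ} {LR : ℝ≥0}
    (hRgrad : LipschitzWith LR (gradient R)) {y yb : ℝ → H} {A : ℝ → E →L[ℝ] H}
    {A₀ : E →L[ℝ] H} {T M δ G : ℝ}
    (hy : ∀ t ∈ Icc 0 T, HasDerivAt y (-(A t ∘L (A t)†) (gradient R (y t))) t)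
    (hyb : ∀ t ∈ Icc 0 T, HasDerivAt yb (-(A₀ ∘L A₀†) (gradient R (yb t))) t)
    (h0 : y 0 = yb 0) (hA₀ : ‖A₀‖ ≤ M) (hA : ∀ t ∈ Ico 0 T, ‖A t‖ ≤ M)
    (hAA₀ : ∀ t ∈ Ico 0 T, ‖A t - A₀‖ ≤ δ) (hδ : 0 ≤ δ)
    (hG : ∀ t ∈ Ico 0 T, ‖gradient R (y t)‖ ≤ G) (hG₀ : 0 ≤ G) :
    ∀ t ∈ Icc 0 T, ‖y t - yb t‖ ≤ 2 * M * δ * G * t * Real.exp (M ^ 2 * LR * t) := by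
  have hM : 0 ≤ M := (norm_nonneg _).trans hA₀
  have hbound : ∀ t ∈ Ico 0 T, ‖(A₀ ∘L A₀†) (gradient R (yb t))
      - (A t ∘L (A t)†) (gradient R (y t))‖ ≤ M ^ 2 * LR * ‖y t - yb t‖ + 2 * M * δ * G := by
    intro t ht
    have hlip : ‖gradient R (yb t) - gradient R (y t)‖ ≤ LR * ‖y t - yb t‖ := by
      simpa [dist_eq_norm, norm_sub_rev (y t)] using hRgrad.dist_le_mul (yb t) (y t)
    have hAA₀' : ‖A₀ - A t‖ ≤ δ := norm_sub_rev (A t) A₀ ▸ hAA₀ t ht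
    calc _ ≤ ‖A₀‖ ^ 2 * ‖gradient R (yb t) - gradient R (y t)‖
          + (‖A₀‖ + ‖A t‖) * ‖A₀ - A t‖ * ‖gradient R (y t)‖ :=
          norm_comp_adjoint_apply_sub_comp_adjoint_apply_le _ _ _ _
      _ ≤ M ^ 2 * (LR * ‖y t - yb t‖) + (M + M) * δ * G := by
          gcongr
          exacts [hA t ht, hG t ht]
      _ = _ := by ring
  intro t ht
  have hgron := norm_le_gronwallBound_of_norm_deriv_right_le (f := fun t => y t - yb t)
    (δ := 0) (K := M ^ 2 * LR) (ε := 2 * M * δ * G)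
    (fun s hs => ((hy s hs).sub (hyb s hs)).continuousAt.continuousWithinAt)
    (fun s hs => ((hy s (Ico_subset_Icc_self hs)).sub
      (hyb s (Ico_subset_Icc_self hs))).hasDerivWithinAt)
    (by simp [h0]) (fun s hs => ?_) t ht
  · rw [sub_zero] at hgron
    exact hgron.trans (gronwallBound_zero_le (by positivity) (by positivity) t)
  rw [neg_sub_neg]
  exact hbound s hs

end

theorem LocallyLipschitz.exists_lipschitzOnWith_closedBall {X Y : Type*} [PseudoMetricSpace X]
    [PseudoEMetricSpace Y] {f : X → Y} (hf : LocallyLipschitz f) (x : X) :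
    ∃ K, ∃ r > 0, LipschitzOnWith K f (closedBall x r) := by
  obtain ⟨K, t, ht, hK⟩ := hf x
  obtain ⟨r, hr, hrt⟩ := nhds_basis_closedBall.mem_iff.1 ht
  exact ⟨K, r, hr, hK.mono hrt⟩

section

variable {X F : Type*} [SeminormedAddCommGroup X] [SeminormedAddCommGroup F] {f : X → F}
  {K : ℝ≥0} {x u : X} {r : ℝ}

theorem LipschitzOnWith.norm_sub_le_of_mem_closedBall (hf : LipschitzOnWith K f (closedBall x r))
    (hu : u ∈ closedBall x r) : ‖f u - f x‖ ≤ K * ‖u - x‖ := by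
  simpa [dist_eq_norm] using hf.dist_le_mul u hu x (mem_closedBall_self (dist_nonneg.trans hu))

theorem LipschitzOnWith.norm_le_of_mem_closedBall (hf : LipschitzOnWith K f (closedBall x r))
    (hu : u ∈ closedBall x r) : ‖f u‖ ≤ ‖f x‖ + K * r :=
  calc ‖f u‖ ≤ ‖f x‖ + ‖f u - f x‖ := norm_le_norm_add_norm_sub' _ _
    _ ≤ ‖f x‖ + K * r := by
        gcongr
        exact (hf.norm_sub_le_of_mem_closedBall hu).trans
          (by gcongr; exact mem_closedBall_iff_norm.1 hu)

end

/-- **Theorem 2.1 (General lazy training), parameter comparison with the linearized flow.**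
If `h w₀ = 0`, then for a fixed time horizon `T > 0` there are constants `C > 0` and
`α₀ > 0` (independent of `α`) such that for all `α ≥ α₀`,
`sup_{t ∈ [0,T]} ‖α h(w_α(t)) − α h̄(w̄_α(t))‖ ≤ C / α`. -/
theorem lazy_general_output_comparison
    {p : ℕ} {H : Type*} [NormedAddCommGroup H] [InnerProductSpace ℝ H] [CompleteSpace H]
    (h : EuclideanSpace ℝ (Fin p) → H)
    (hdiff : Differentiable ℝ h)
    (hDhLip : LocallyLipschitz (fun u => fderiv ℝ h u))
    (R : H → ℝ) (hRnonneg : ∀ y, 0 ≤ R y) (hRdiff : Differentiable ℝ R)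
    (LR : ℝ≥0) (hRgrad : LipschitzWith LR (fun y => gradient R y))
    (w₀ : EuclideanSpace ℝ (Fin p)) (h0 : h w₀ = 0)
    (w wb : ℝ → ℝ → EuclideanSpace ℝ (Fin p))
    (hw0 : ∀ α : ℝ, 0 < α → w α 0 = w₀)
    (hwflow : ∀ α : ℝ, 0 < α → ∀ t : ℝ, 0 ≤ t →
      HasDerivAt (w α) (-(gradient (fun u => R (α • h u) / α ^ 2) (w α t))) t)
    (hwb0 : ∀ α : ℝ, 0 < α → wb α 0 = w₀)
    (hwbflow : ∀ α : ℝ, 0 < α → ∀ t : ℝ, 0 ≤ t →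
      HasDerivAt (wb α)
        (-(gradient (fun u => R (α • (h w₀ + fderiv ℝ h w₀ (u - w₀))) / α ^ 2) (wb α t))) t)
    (T : ℝ) (hT : 0 < T) :
    ∃ C > 0, ∃ α₀ > 0, ∀ α : ℝ, α₀ ≤ α → ∀ t ∈ Set.Icc (0 : ℝ) T,
      ‖α • h (w α t) - α • (h w₀ + fderiv ℝ h w₀ (wb α t - w₀))‖ ≤ C / α := by
  obtain ⟨L, r, hr, hLip⟩ := hDhLip.exists_lipschitzOnWith_closedBall w₀
  set A₀ := fderiv ℝ h w₀
  -- `M` bounds `Dh` on the ball, `G` bounds `∇R` along the flow, `V / α` bounds the speed of `w α`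
  set M := ‖A₀‖ + L * r
  set G := √(2 * ((LR + 1 : ℝ≥0) : ℝ) * R 0)
  set V := M * G + 1
  refine ⟨2 * M * (L * V * T) * G * T * Real.exp (M ^ 2 * LR * T) + 1, by positivity,
    V * T / r, by positivity, fun α hα t ht => ?_⟩
  have hα₀ : 0 < α := (by positivity : 0 < V * T / r).trans_le hα
  have hflow : IsGradientFlow (fun u => R (α • h u) / α ^ 2) (w α) := hwflow α hα₀
  have hG : ∀ s, 0 ≤ s → ‖gradient R (α • h (w α s))‖ ≤ G := fun s =>
    hflow.norm_gradient_le hRnonneg hRdiff (hRgrad.weaken le_self_add) (by positivity) hdiff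
      (by rw [hw0 α hα₀, h0])
  have hdist : ∀ s ∈ Icc 0 T, ‖w α s - w₀‖ ≤ V / α * T := fun s hs => by
    have := hflow.norm_sub_le_of_norm_fderiv_le hRdiff (fun u => (hdiff u).hasFDerivAt) hα₀
      (by rw [hw0 α hα₀]; exact fun u hu => hLip.norm_le_of_mem_closedBall hu) (by positivity)
      hG (by rwa [div_le_iff₀ hr] at hα) s hs
    rw [hw0 α hα₀] at this
    exact this.trans (by gcongr; exact hs.2)
  have hball : ∀ s ∈ Ico 0 T, w α s ∈ closedBall w₀ r := fun s hs =>
    mem_closedBall_iff_norm.2 ((hdist s (Ico_subset_Icc_self hs)).trans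
      (by rwa [div_mul_eq_mul_div, div_le_iff₀' hα₀, ← div_le_iff₀ hr]))
  have hy : ∀ s ∈ Icc 0 T, HasDerivAt (fun s => α • h (w α s))
      (-(fderiv ℝ h (w α s) ∘L (fderiv ℝ h (w α s))†) (gradient R (α • h (w α s)))) s :=
    fun s hs => hflow.hasDerivAt_smul_comp hRdiff (fun u => (hdiff u).hasFDerivAt) hα₀.ne' hs.1
  have hDh_lin : ∀ u, HasFDerivAt (fun u => h w₀ + A₀ (u - w₀)) A₀ u := fun u =>
    ((A₀.hasFDerivAt.comp u ((hasFDerivAt_id u).sub_const w₀)).const_add (h w₀)).congr_fderiv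
      (by ext; simp)
  have hyb : ∀ s ∈ Icc 0 T, HasDerivAt (fun s => α • (h w₀ + A₀ (wb α s - w₀)))
      (-(A₀ ∘L A₀†) (gradient R (α • (h w₀ + A₀ (wb α s - w₀))))) s := fun s hs =>
    IsGradientFlow.hasDerivAt_smul_comp (φ := fun u => h w₀ + A₀ (u - w₀)) (hwbflow α hα₀)
      hRdiff hDh_lin hα₀.ne' hs.1
  have hy0 : α • h (w α 0) = α • (h w₀ + A₀ (wb α 0 - w₀)) := by simp [hw0 α hα₀, hwb0 α hα₀]
  calc _ ≤ 2 * M * (L * (V / α * T)) * G * t * Real.exp (M ^ 2 * LR * t) :=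
        norm_sub_le_of_hasDerivAt_neg_comp_adjoint hRgrad hy hyb hy0
          (le_add_of_nonneg_right (by positivity))
          (fun s hs => hLip.norm_le_of_mem_closedBall (hball s hs))
          (fun s hs => (hLip.norm_sub_le_of_mem_closedBall (hball s hs)).trans
            (by gcongr; exact hdist s (Ico_subset_Icc_self hs)))
          (by positivity) (fun s hs => hG s hs.1) (Real.sqrt_nonneg _) t ht
    _ ≤ 2 * M * (L * (V / α * T)) * G * T * Real.exp (M ^ 2 * LR * T) := by
        gcongr <;> exact ht.2
    _ = 2 * M * (L * V * T) * G * T * Real.exp (M ^ 2 * LR * T) / α := by ring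
    _ ≤ _ := by gcongr; linarith
end

section
/- Let F : 𝓕 → ℝ be m-strongly convex with M-Lipschitz gradient and global minimizer y⋆. Let T > 0 and let Σ(t), for 0 ≤ t ≤ T, be a time-dependent continuous family of bounded self-adjoint linear operators on 𝓕 satisfying ⟨Σ(t)y, y⟩ ≥ λ‖y‖² for all y ∈ 𝓕 and some λ > 0. Then any solution y : [0,T] → 𝓕 of the differential equation y′(t) = −Σ(t)∇F(y(t)) satisfies, for all 0 ≤ t ≤ T, ‖y(t) − y⋆‖ ≤ (M/m)^{1/2} ‖y(0) − y⋆‖ exp(−m λ t). -/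
/-!
Along the flow, `d/dt (f y - f y⋆) = -⟪Σ ∇f y, ∇f y⟫ ≤ -λ ‖∇f y‖² ≤ -2mλ (f y - f y⋆)`, the last
step being the Polyak–Łojasiewicz inequality that strong convexity implies; Grönwall then gives
decay of the suboptimality at rate `2mλ`. Strong convexity and the descent lemma for an
`M`-Lipschitz gradient sandwich the suboptimality between `m/2 ‖y - y⋆‖²` and `M/2 ‖y - y⋆‖²`,
which turns this into the bound on the distance to `y⋆`.
-/

open scoped RealInnerProductSpace
open Set Real

theorem ConvexOn.add_le_of_hasFDerivAt {E : Type*} [NormedAddCommGroup E] [NormedSpace ℝ E]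
    {φ : E → ℝ} {φ' : E →L[ℝ] ℝ} {x : E} (hφ : ConvexOn ℝ univ φ) (hx : HasFDerivAt φ φ' x)
    (v : E) : φ x + φ' v ≤ φ (x + v) := by
  have hline : HasDerivAt (φ ∘ AffineMap.lineMap (k := ℝ) x (x + v)) (φ' v) 0 := by
    simpa using hx.comp_hasDerivAt_of_eq 0 AffineMap.hasDerivAt_lineMap
      (AffineMap.lineMap_apply_zero x (x + v)).symm
  have := (hφ.comp_affineMap (AffineMap.lineMap (k := ℝ) x (x + v))).le_slope_of_hasDerivAt
    (mem_univ 0) (mem_univ 1) one_pos hline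
  simp only [slope_def_field, Function.comp_apply, AffineMap.lineMap_apply_one,
    AffineMap.lineMap_apply_zero, sub_zero, div_one] at this
  linarith

section Gradient

variable {H : Type*} [NormedAddCommGroup H] [InnerProductSpace ℝ H] [CompleteSpace H]

theorem IsLocalMin.hasGradientAt_eq_zero {f : H → ℝ} {g x : H} (hmin : IsLocalMin f x)
    (hg : HasGradientAt f g x) : g = 0 := by
  simpa using hmin.hasFDerivAt_eq_zero (hasGradientAt_iff_hasFDerivAt.mp hg)

theorem HasGradientAt.comp_hasDerivAt {f : H → ℝ} {g : H} {γ : ℝ → H} {γ' : H} {t : ℝ}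
    (hf : HasGradientAt f g (γ t)) (hγ : HasDerivAt γ γ' t) :
    HasDerivAt (fun s => f (γ s)) ⟪g, γ'⟫ t :=
  (hasGradientAt_iff_hasFDerivAt.mp hf).comp_hasDerivAt t hγ

theorem StrongConvexOn.add_inner_add_sq_le {f : H → ℝ} {m : ℝ} {g x : H}
    (hf : StrongConvexOn univ m f) (hg : HasGradientAt f g x) (v : H) :
    f x + ⟪g, v⟫ + m / 2 * ‖v‖ ^ 2 ≤ f (x + v) := by
  have hquad := (hasStrictFDerivAt_norm_sq x).hasFDerivAt.const_mul (m / 2)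
  have hφ := (strongConvexOn_iff_convex.mp hf).add_le_of_hasFDerivAt
    ((hasGradientAt_iff_hasFDerivAt.mp hg).sub hquad) v
  simp only [sub_apply, InnerProductSpace.toDual_apply_apply, smul_apply, coe_innerSL_apply,
    nsmul_eq_mul, Nat.cast_ofNat, smul_eq_mul,
    norm_add_sq_real] at hφ
  linarith

theorem StrongConvexOn.mul_sub_le_norm_gradient_sq {f : H → ℝ} {m : ℝ} {g x : H} (hm : 0 ≤ m)
    (hf : StrongConvexOn univ m f) (hg : HasGradientAt f g x) (z : H) :
    2 * m * (f x - f z) ≤ ‖g‖ ^ 2 := by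
  have hfirst := hf.add_inner_add_sq_le hg (z - x)
  rw [add_sub_cancel] at hfirst
  have hcs := neg_le_of_abs_le (abs_real_inner_le_norm g (z - x))
  nlinarith [sq_nonneg (m * ‖z - x‖ - ‖g‖), mul_le_mul_of_nonneg_left hcs hm]

theorem apply_add_le_of_norm_gradient_sub_le {f : H → ℝ} (hf : Differentiable ℝ f) {M : ℝ}
    (hM : ∀ y z, ‖gradient f y - gradient f z‖ ≤ M * ‖y - z‖) (x v : H) :
    f (x + v) ≤ f x + ⟪gradient f x, v⟫ + M / 2 * ‖v‖ ^ 2 := by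
  set h : ℝ → ℝ := fun s => f (x + s • v) - s * ⟪gradient f x, v⟫ - M / 2 * ‖v‖ ^ 2 * s ^ 2
  have hderiv : ∀ s, HasDerivAt h
      (⟪gradient f (x + s • v) - gradient f x, v⟫ - M * ‖v‖ ^ 2 * s) s := by
    intro s
    have hline : HasDerivAt (fun s : ℝ => x + s • v) v s := by
      simpa using ((hasDerivAt_id s).smul_const v).const_add x
    have := (((hf (x + s • v)).hasGradientAt.comp_hasDerivAt hline).sub
      ((hasDerivAt_id s).mul_const ⟪gradient f x, v⟫)).sub
      ((hasDerivAt_pow 2 s).const_mul (M / 2 * ‖v‖ ^ 2))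
    refine this.congr_deriv ?_
    rw [inner_sub_left]
    push_cast
    ring
  have hanti : AntitoneOn h (Icc 0 1) := by
    refine antitoneOn_of_hasDerivWithinAt_nonpos (convex_Icc 0 1)
      (fun s _ => (hderiv s).continuousAt.continuousWithinAt)
      (fun s _ => (hderiv s).hasDerivWithinAt) fun s hs => ?_
    rw [interior_Icc] at hs
    calc ⟪gradient f (x + s • v) - gradient f x, v⟫ - M * ‖v‖ ^ 2 * s
        ≤ M * ‖s • v‖ * ‖v‖ - M * ‖v‖ ^ 2 * s := by
          gcongr
          calc ⟪gradient f (x + s • v) - gradient f x, v⟫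
              ≤ ‖gradient f (x + s • v) - gradient f x‖ * ‖v‖ := real_inner_le_norm _ _
            _ ≤ M * ‖s • v‖ * ‖v‖ := by
                gcongr
                simpa using hM (x + s • v) x
      _ = 0 := by rw [norm_smul, norm_of_nonneg hs.1.le]; ring
  have := hanti (left_mem_Icc.mpr zero_le_one) (right_mem_Icc.mpr zero_le_one) zero_le_one
  simp only [h, zero_smul, add_zero, one_smul, zero_mul, one_mul, sub_zero, mul_one, one_pow,
    ne_eq, OfNat.ofNat_ne_zero, not_false_eq_true, zero_pow, mul_zero] at this
  linarith

theorem sub_le_mul_exp_of_gradient_flow {f : H → ℝ} (hf : Differentiable ℝ f) {m lam c a b : ℝ}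
    (hlam : 0 ≤ lam) (hPL : ∀ x, 2 * m * (f x - c) ≤ ‖gradient f x‖ ^ 2)
    {Sig : ℝ → H →L[ℝ] H} (hSig : ∀ t ∈ Icc a b, ∀ v, lam * ‖v‖ ^ 2 ≤ ⟪Sig t v, v⟫)
    {y : ℝ → H} (hy : ∀ t ∈ Icc a b, HasDerivAt y (-(Sig t (gradient f (y t)))) t) :
    ∀ t ∈ Icc a b, f (y t) - c ≤ (f (y a) - c) * exp (-(2 * m * lam) * (t - a)) := by
  have hV : ∀ t ∈ Icc a b, HasDerivAt (fun t => f (y t) - c)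
      ⟪gradient f (y t), -(Sig t (gradient f (y t)))⟫ t := fun t ht =>
    ((hf (y t)).hasGradientAt.comp_hasDerivAt (hy t ht)).sub_const c
  have hdecay : ∀ t ∈ Ico a b, ⟪gradient f (y t), -(Sig t (gradient f (y t)))⟫ ≤
      -(2 * m * lam) * (f (y t) - c) + 0 := fun t ht => by
    rw [inner_neg_right, real_inner_comm]
    nlinarith [hSig t (Ico_subset_Icc_self ht) (gradient f (y t)),
      mul_le_mul_of_nonneg_left (hPL (y t)) hlam]
  intro t ht
  simpa only [gronwallBound_ε0] using le_gronwallBound_of_liminf_deriv_right_le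
    (fun t ht => (hV t ht).continuousAt.continuousWithinAt)
    (fun t ht _ hr => (hV t (Ico_subset_Icc_self ht)).hasDerivWithinAt.liminf_right_slope_le hr)
    le_rfl hdecay t ht

end Gradient

theorem strongly_convex_flow_time_dependent_metric_general
    {H : Type*} [NormedAddCommGroup H] [InnerProductSpace ℝ H] [CompleteSpace H]
    (f : H → ℝ) (hdiff : Differentiable ℝ f)
    (m M : ℝ) (hm : 0 < m)
    (hconv : ConvexOn ℝ Set.univ (fun y => f y - m / 2 * ‖y‖ ^ 2))
    (hgrad : ∀ y z, ‖gradient f y - gradient f z‖ ≤ M * ‖y - z‖)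
    (ystar : H) (hmin : ∀ y, f ystar ≤ f y)
    (T : ℝ)
    (Sig : ℝ → H →L[ℝ] H)
    (lam : ℝ) (hlam : 0 < lam)
    (hSigLB : ∀ t ∈ Set.Icc (0 : ℝ) T, ∀ y : H, lam * ‖y‖ ^ 2 ≤ ⟪Sig t y, y⟫)
    (y : ℝ → H)
    (hyflow : ∀ t ∈ Set.Icc (0 : ℝ) T, HasDerivAt y (-(Sig t (gradient f (y t)))) t) :
    ∀ t ∈ Set.Icc (0 : ℝ) T,
      ‖y t - ystar‖ ≤ Real.sqrt (M / m) * ‖y 0 - ystar‖ * Real.exp (-(m * lam * t)) := by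
  have hsc : StrongConvexOn univ m f := strongConvexOn_iff_convex.mpr hconv
  have hgrad_min : gradient f ystar = 0 :=
    IsLocalMin.hasGradientAt_eq_zero (.of_forall hmin) (hdiff ystar).hasGradientAt
  intro t ht
  have hgrowth : m / 2 * ‖y t - ystar‖ ^ 2 ≤ f (y t) - f ystar := by
    have := hsc.add_inner_add_sq_le (hdiff ystar).hasGradientAt (y t - ystar)
    rw [hgrad_min, inner_zero_left, add_sub_cancel] at this
    linarith
  have hPL x : 2 * m * (f x - f ystar) ≤ ‖gradient f x‖ ^ 2 :=
    hsc.mul_sub_le_norm_gradient_sq hm.le (hdiff x).hasGradientAt ystar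
  have hdecay := sub_le_mul_exp_of_gradient_flow hdiff hlam.le hPL hSigLB hyflow t ht
  have hdescent : f (y 0) - f ystar ≤ M / 2 * ‖y 0 - ystar‖ ^ 2 := by
    have := apply_add_le_of_norm_gradient_sub_le hdiff hgrad ystar (y 0 - ystar)
    rw [hgrad_min, inner_zero_left, add_sub_cancel] at this
    linarith
  have hexp : exp (-(m * lam * t)) ^ 2 = exp (-(2 * m * lam) * (t - 0)) := by
    rw [← exp_nat_mul]
    ring_nf
  have hsq : ‖y t - ystar‖ ^ 2 ≤ M / m * (‖y 0 - ystar‖ * exp (-(m * lam * t))) ^ 2 := by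
    rw [mul_pow, hexp, ← mul_assoc, div_mul_eq_mul_div, div_mul_eq_mul_div, le_div_iff₀ hm]
    nlinarith [mul_le_mul_of_nonneg_right hdescent (exp_pos (-(2 * m * lam) * (t - 0))).le]
  calc ‖y t - ystar‖ ≤ √(M / m * (‖y 0 - ystar‖ * exp (-(m * lam * t))) ^ 2) :=
        le_sqrt_of_sq_le hsq
    _ = √(M / m) * ‖y 0 - ystar‖ * exp (-(m * lam * t)) := by
      rw [sqrt_mul' _ (sq_nonneg _), sqrt_sq (by positivity), ← mul_assoc]

/-- **Lemma B.1 (Strongly-convex gradient flow in a time-dependent metric).**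
If `f` is `m`-strongly convex with `M`-Lipschitz gradient and minimizer `y⋆`, and `Σ(t)`
is a continuous family of self-adjoint operators with eigenvalues bounded below by
`λ > 0` on `[0, T]`, then any solution of `y′(t) = −Σ(t)∇f(y(t))` satisfies
`‖y(t) − y⋆‖ ≤ (M/m)^{1/2} ‖y(0) − y⋆‖ exp(−mλt)` for `0 ≤ t ≤ T`. -/
theorem strongly_convex_flow_time_dependent_metric
    {H : Type*} [NormedAddCommGroup H] [InnerProductSpace ℝ H] [CompleteSpace H]
    (f : H → ℝ) (hdiff : Differentiable ℝ f)
    (m M : ℝ) (hm : 0 < m) (hM : 0 < M)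
    (hconv : ConvexOn ℝ Set.univ (fun y => f y - m / 2 * ‖y‖ ^ 2))
    (hgrad : ∀ y z, ‖gradient f y - gradient f z‖ ≤ M * ‖y - z‖)
    (ystar : H) (hmin : ∀ y, f ystar ≤ f y)
    (T : ℝ) (hT : 0 < T)
    (Sig : ℝ → H →L[ℝ] H) (hSigCont : ContinuousOn Sig (Set.Icc 0 T))
    (hSigSA : ∀ t ∈ Set.Icc (0 : ℝ) T, IsSelfAdjoint (Sig t))
    (lam : ℝ) (hlam : 0 < lam)
    (hSigLB : ∀ t ∈ Set.Icc (0 : ℝ) T, ∀ y : H, lam * ‖y‖ ^ 2 ≤ ⟪Sig t y, y⟫)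
    (y : ℝ → H)
    (hyflow : ∀ t ∈ Set.Icc (0 : ℝ) T, HasDerivAt y (-(Sig t (gradient f (y t)))) t) :
    ∀ t ∈ Set.Icc (0 : ℝ) T,
      ‖y t - ystar‖ ≤ Real.sqrt (M / m) * ‖y 0 - ystar‖ * Real.exp (-(m * lam * t)) :=
  strongly_convex_flow_time_dependent_metric_general f hdiff m M hm hconv hgrad ystar hmin T Sig lam
    hlam hSigLB y hyflow
end
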